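/- Let q be a real number with q > 0 and q ≠ 1, let k ≥ 1 and x ≥ 1 be natural numbers, and let r_1, …, r_k ≥ 1 be natural numbers. Then the q-multinomial coefficient satisfies the recurrence C_q(x; r_1,…,r_k) = C_q(x−1; r_1,…,r_k) + Σ_{j=1}^{k} q^{x−s_j} · C_q(x−1; r_1,…,r_{j−1}, r_j−1, r_{j+1},…,r_k), where s_j = r_1 + ⋯ + r_j. -/

import Mathlib

noncomputable def qNum (q : ℝ) (m : ℤ) : ℝ := (1 - q ^ m) / (1 - q)

noncomputable def qFactorial (q : ℝ) (n : ℕ) : ℝ :=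
  ∏ i ∈ Finset.range n, qNum q ((i : ℤ) + 1)

noncomputable def qFacOrd (q : ℝ) (x : ℤ) (r : ℕ) : ℝ :=
  ∏ i ∈ Finset.range r, qNum q (x - (i : ℤ))

noncomputable def qMultinomial (q : ℝ) (x : ℤ) {k : ℕ} (r : Fin k → ℕ) : ℝ :=
  qFacOrd q x (∑ j, r j) / ∏ j, qFactorial q (r j)


/-!
Write `S = r_1 + ⋯ + r_k`. Peeling one factor off `[x]_{S,q}` at either end, all three kinds of
coefficients in the recurrence are `[x-1]_{S-1,q} / ∏ [r_i]_q!` times a single q-number: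
`[x]_q`, `[x-S]_q` and `[r_j]_q` respectively. The recurrence is therefore the identity
`[x]_q = [x-S]_q + Σ_j q^{x-s_j} [r_j]_q`, which follows by induction on `k` from
`[m+n]_q = [m]_q + q^m [n]_q`.
-/

open Finset

lemma qNum_add {q : ℝ} (hq : q ≠ 0) (m n : ℤ) :
    qNum q (m + n) = qNum q m + q ^ m * qNum q n := by
  simp only [qNum, zpow_add₀ hq]
  ring

lemma qNum_ne_zero {q : ℝ} (hq : 0 < q) (hq1 : q ≠ 1) {m : ℤ} (hm : m ≠ 0) :
    qNum q m ≠ 0 := by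
  refine div_ne_zero (fun h => hm ?_) (sub_ne_zero.mpr hq1.symm)
  exact zpow_right_injective₀ hq hq1 (by simpa using (sub_eq_zero.mp h).symm)

lemma qFactorial_succ (q : ℝ) (n : ℕ) :
    qFactorial q (n + 1) = qFactorial q n * qNum q (n + 1) :=
  prod_range_succ _ _

lemma qFacOrd_succ (q : ℝ) (x : ℤ) (n : ℕ) :
    qFacOrd q x (n + 1) = qFacOrd q x n * qNum q (x - n) :=
  prod_range_succ _ _

lemma qFacOrd_succ' (q : ℝ) (x : ℤ) (n : ℕ) :
    qFacOrd q x (n + 1) = qNum q x * qFacOrd q (x - 1) n := by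
  simp only [qFacOrd, prod_range_succ', Nat.cast_add, Nat.cast_one, sub_zero, Nat.cast_zero,
    sub_sub, add_comm (1 : ℤ), mul_comm]

lemma Fin.sum_filter_le_castSucc {M : Type*} [AddCommMonoid M] {k : ℕ} (f : Fin (k + 1) → M)
    (j : Fin k) :
    ∑ i ∈ univ.filter (· ≤ j.castSucc), f i = ∑ i ∈ univ.filter (· ≤ j), f i.castSucc := by
  simp [sum_filter, Fin.sum_univ_castSucc]

lemma Fin.sum_filter_le_last {M : Type*} [AddCommMonoid M] {k : ℕ} (f : Fin (k + 1) → M) :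
    ∑ i ∈ univ.filter (· ≤ Fin.last k), f i = ∑ i, f i := by
  simp [Fin.le_last]

theorem qNum_eq_qNum_sub_sum_add_sum {q : ℝ} (hq : q ≠ 0) (x : ℤ) {k : ℕ} (r : Fin k → ℤ) :
    qNum q x = qNum q (x - ∑ j, r j) +
      ∑ j, q ^ (x - ∑ i ∈ univ.filter (· ≤ j), r i) * qNum q (r j) := by
  induction k with
  | zero => simp
  | succ k ih =>
    simp only [Fin.sum_univ_castSucc r, Fin.sum_univ_castSucc (fun j => _ * _),
      Fin.sum_filter_le_castSucc, Fin.sum_filter_le_last]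
    set T := ∑ j : Fin k, r j.castSucc
    have hlast : qNum q (x - T) = qNum q (x - (T + r (Fin.last k))) +
        q ^ (x - (T + r (Fin.last k))) * qNum q (r (Fin.last k)) := by
      rw [← qNum_add hq]
      congr 1
      ring
    linear_combination ih (fun j => r j.castSucc) + hlast

lemma qFactorial_eq_qFactorial_pred_mul {n : ℕ} (hn : 1 ≤ n) (q : ℝ) :
    qFactorial q n = qFactorial q (n - 1) * qNum q n := by
  obtain ⟨m, rfl⟩ := Nat.exists_eq_add_of_le' hn
  rw [qFactorial_succ, Nat.add_sub_cancel, Nat.cast_succ]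

section UpdatePred

variable {k : ℕ} {r : Fin k → ℕ} {j : Fin k}

lemma sum_update_pred {n : ℕ} (hrj : 1 ≤ r j) (hn : ∑ i, r i = n + 1) :
    ∑ i, Function.update r j (r j - 1) i = n := by
  rw [sum_update_of_mem (mem_univ j)]
  rw [sum_eq_add_sum_sdiff_singleton_of_mem (mem_univ j)] at hn
  omega

lemma prod_qFactorial_update_pred_mul (q : ℝ) (hrj : 1 ≤ r j) :
    (∏ i, qFactorial q (Function.update r j (r j - 1) i)) * qNum q (r j) =
      ∏ i, qFactorial q (r i) := by
  simp only [Function.apply_update (fun _ => qFactorial q), prod_update_of_mem (mem_univ j),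
    prod_eq_mul_prod_sdiff_singleton_of_mem (mem_univ j) (fun i => qFactorial q (r i)),
    qFactorial_eq_qFactorial_pred_mul hrj q]
  ring

variable {q : ℝ} {n : ℕ}

lemma qMultinomial_eq_qNum_mul (x : ℤ) (hn : ∑ i, r i = n + 1) :
    qMultinomial q x r = qNum q x * (qFacOrd q (x - 1) n / ∏ i, qFactorial q (r i)) := by
  rw [qMultinomial, hn, qFacOrd_succ', mul_div_assoc]

lemma qMultinomial_sub_one_eq_qNum_mul (x : ℤ) (hn : ∑ i, r i = n + 1) :
    qMultinomial q (x - 1) r =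
      qNum q (x - ∑ i, (r i : ℤ)) * (qFacOrd q (x - 1) n / ∏ i, qFactorial q (r i)) := by
  rw [qMultinomial, hn, qFacOrd_succ, ← Nat.cast_sum, hn, mul_comm, mul_div_assoc]
  congr 2
  push_cast
  ring

lemma qMultinomial_update_pred (hq : 0 < q) (hq1 : q ≠ 1) (y : ℤ) (hrj : 1 ≤ r j)
    (hn : ∑ i, r i = n + 1) :
    qMultinomial q y (Function.update r j (r j - 1)) =
      qNum q (r j) * (qFacOrd q y n / ∏ i, qFactorial q (r i)) := by
  have hrj' : qNum q (r j) ≠ 0 := qNum_ne_zero hq hq1 (by omega)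
  rw [qMultinomial, sum_update_pred hrj hn, ← prod_qFactorial_update_pred_mul q hrj,
    mul_comm, div_mul_eq_mul_div, mul_div_mul_right _ _ hrj']

end UpdatePred

theorem qMultinomial_recurrence_inv'_general (q : ℝ) (hq : 0 < q) (hq1 : q ≠ 1)
    (k x : ℕ) (r : Fin k → ℕ) (hr : ∀ j, 1 ≤ r j) :
    qMultinomial q (x : ℤ) r =
      qMultinomial q ((x : ℤ) - 1) r +
      ∑ j : Fin k,
        q ^ ((x : ℤ) - ∑ i ∈ Finset.univ.filter (fun i => i ≤ j), (r i : ℤ)) *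
          qMultinomial q ((x : ℤ) - 1) (Function.update r j (r j - 1)) := by
  rcases k.eq_zero_or_pos with rfl | hk
  · simp [qMultinomial, qFacOrd]
  obtain ⟨n, hn⟩ : ∃ n, ∑ i, r i = n + 1 :=
    ⟨_, (Nat.succ_pred_eq_of_pos (sum_pos (fun i _ => hr i) ⟨⟨0, hk⟩, mem_univ _⟩)).symm⟩
  rw [qMultinomial_eq_qNum_mul _ hn, qMultinomial_sub_one_eq_qNum_mul _ hn,
    qNum_eq_qNum_sub_sum_add_sum hq.ne' x (fun i => (r i : ℤ)), add_mul, sum_mul]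
  congr 1
  refine sum_congr rfl fun j _ => ?_
  rw [qMultinomial_update_pred hq hq1 _ (hr j) hn, mul_assoc]

/-- Second inverted-parameter q-multinomial recurrence:
    C_q(x; r) = C_q(x−1; r) + Σ_j q^(x−s_j) C_q(x−1; r with r_j−1),
    s_j = r_1 + ⋯ + r_j. -/
theorem qMultinomial_recurrence_inv' (q : ℝ) (hq : 0 < q) (hq1 : q ≠ 1)
    (k x : ℕ) (hk : 1 ≤ k) (hx : 1 ≤ x) (r : Fin k → ℕ) (hr : ∀ j, 1 ≤ r j) :
    qMultinomial q (x : ℤ) r =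
      qMultinomial q ((x : ℤ) - 1) r +
      ∑ j : Fin k,
        q ^ ((x : ℤ) - ∑ i ∈ Finset.univ.filter (fun i => i ≤ j), (r i : ℤ)) *
          qMultinomial q ((x : ℤ) - 1) (Function.update r j (r j - 1)) :=
  qMultinomial_recurrence_inv'_general q hq hq1 k x r hr
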